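/- If X is a real random variable with E[X²] = 1, then E[cos(tX)] ≥ 0 for all real t with |t| ≤ π/2. -/
import Mathlib

open MeasureTheory Real

lemma hasDerivAt_g (y : ℝ) :
    HasDerivAt (fun y : ℝ => Real.cos (π/2*y) + π/4*y^2)
      (-Real.sin (π/2*y) * (π/2) + π/4*(2*y)) y := by
  have h1 : HasDerivAt (fun y : ℝ => π/2*y) (π/2) y := by
    simpa using (hasDerivAt_id y).const_mul (π/2)
  have h2 := h1.cos
  have h3 : HasDerivAt (fun y : ℝ => π/4*y^2) (π/4*(2*y)) y := by
    simpa using (hasDerivAt_pow 2 y).const_mul (π/4)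
  exact h2.add h3

lemma key1 : ∀ y ∈ Set.Icc (0:ℝ) 1, π/4*(1-y^2) ≤ Real.cos (π/2*y) := by
  intro y hy
  set g : ℝ → ℝ := fun y => Real.cos (π/2*y) + π/4*y^2 with hg
  have hanti : AntitoneOn g (Set.Icc 0 1) := by
    apply antitoneOn_of_deriv_nonpos (convex_Icc 0 1)
    · exact fun z _ => ((hasDerivAt_g z).continuousAt).continuousWithinAt
    · exact fun z _ => ((hasDerivAt_g z).differentiableAt).differentiableWithinAt
    · intro z hz
      rw [interior_Icc] at hz
      rw [(hasDerivAt_g z).deriv]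
      have hsin : z ≤ Real.sin (π/2*z) := le_sin_mul hz.1.le hz.2.le
      nlinarith [Real.pi_pos]
  have := hanti hy (Set.right_mem_Icc.2 zero_le_one) hy.2
  have hg1 : g 1 = π/4 := by simp [hg, mul_one, Real.cos_pi_div_two]
  simp only [hg] at this hg1 ⊢
  rw [hg1] at this
  nlinarith [this]

lemma keylem (t x : ℝ) (ht : |t| ≤ π/2) : π/4*(1-x^2) ≤ Real.cos (t*x) := by
  have hcos : Real.cos (t*x) = Real.cos (|t| * |x|) := by
    rw [← abs_mul, Real.cos_abs]
  rw [hcos]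
  rcases le_or_gt (|x|) 2 with hx2 | hx2
  · have hmono : Real.cos (π/2 * |x|) ≤ Real.cos (|t| * |x|) :=
      Real.cos_le_cos_of_nonneg_of_le_pi (by positivity)
        (by nlinarith [Real.pi_pos]) (by nlinarith [abs_nonneg x, abs_nonneg t])
    have hb : π/4*(1-x^2) ≤ Real.cos (π/2 * |x|) := by
      rcases le_or_gt (|x|) 1 with hx1 | hx1
      · have := key1 (|x|) ⟨abs_nonneg x, hx1⟩
        calc π/4*(1-x^2) = π/4*(1-|x|^2) := by rw [sq_abs]
        _ ≤ _ := this
      · have hs : π/2 - π/2 * |x| ≤ Real.sin (π/2 - π/2 * |x|) :=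
          Real.le_sin (by nlinarith [Real.pi_pos])
        have hc : Real.cos (π/2 * |x|) = Real.sin (π/2 - π/2 * |x|) :=
          (Real.sin_pi_div_two_sub _).symm
        rw [hc, ← sq_abs x]
        nlinarith [Real.pi_pos, sq_nonneg (|x| - 1)]
    linarith
  · have h1 : (-1:ℝ) ≤ Real.cos (|t| * |x|) := Real.neg_one_le_cos _
    have : x^2 = |x|^2 := (sq_abs x).symm
    have h3 : (3:ℝ) < |x|^2 - 1 := by nlinarith
    nlinarith [Real.pi_gt_three, mul_lt_mul_of_pos_left h3 Real.pi_pos,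
      mul_pos Real.pi_pos (show (0:ℝ) < |x|^2 - 1 by linarith)]

theorem stmt_7 {Ω : Type*} [MeasureSpace Ω] (μ : Measure Ω) [IsProbabilityMeasure μ]
    (X : Ω → ℝ) (hXm : Measurable X) (hX2 : Integrable (fun ω => X ω ^ 2) μ)
    (hvar : ∫ ω, X ω ^ 2 ∂μ = 1) (t : ℝ) (ht : |t| ≤ Real.pi / 2) :
    0 ≤ ∫ ω, Real.cos (t * X ω) ∂μ := by
  have hmeas : AEStronglyMeasurable (fun ω => Real.cos (t * X ω)) μ :=
    (Real.measurable_cos.comp (measurable_const.mul hXm)).aestronglyMeasurable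
  have hint : Integrable (fun ω => Real.cos (t * X ω)) μ := by
    apply Integrable.mono' (integrable_const (1:ℝ)) hmeas
    filter_upwards with ω
    rw [Real.norm_eq_abs]
    exact Real.abs_cos_le_one _
  have hgint : Integrable (fun ω => π/4*(1 - X ω ^ 2)) μ :=
    ((integrable_const (1:ℝ)).sub hX2).const_mul _
  have hle : ∫ ω, π/4*(1 - X ω ^ 2) ∂μ ≤ ∫ ω, Real.cos (t * X ω) ∂μ :=
    integral_mono hgint hint (fun ω => keylem t (X ω) ht)
  have hg : ∫ ω, π/4*(1 - X ω ^ 2) ∂μ = 0 := by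
    rw [integral_const_mul, integral_sub (integrable_const 1) hX2, hvar]
    simp
  linarith
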